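/- Let 𝒜 = {A^ν : ν ∈ I} be a nonempty family of infinite real matrices. Then every bounded convergent real sequence x satisfies lim_n A^ν_n x = lim x uniformly in ν, and each A^ν maps bounded convergent sequences into bounded sequences, if and only if: (M1) sup_n ∑_k |a^ν_{n,k}| < ∞ for each ν; (M2) sup_ν sup_{n ≥ N} ∑_k |a^ν_{n,k}| < ∞ for some N; (M3) lim_n ∑_k a^ν_{n,k} = 1 uniformly in ν; (M4) lim_n a^ν_{n,k} = 0 uniformly in ν, for each fixed k. -/

import Mathlib

/-!
A row `c ∈ ℓ¹` acts on the Banach space `c₀ = C₀(ℕ, ℝ)` as a functional of norm at least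
`∑ |c k|`, as testing on truncated sign vectors shows. Necessity: if `∑ c k x k` converges for
every null `x`, the truncations of `c` form a pointwise bounded family of functionals, so
`c ∈ ℓ¹` by Banach–Steinhaus; (M1) is Banach–Steinhaus for the rows of `A^ν`, and (M2) is a
Baire-category variant for families that are only eventually bounded at each point, which is
what uniform convergence in `ν` gives; (M3) and (M4) come from testing on the constant `1` and
on unit vectors. Sufficiency: split `A x = l ∑ a_k + A (x - l)`, and `A (x - l)` into the head
`k < K`, small by (M4), and the tail, small by (M2) once `x - l` is small beyond `K`.
Uniformity in `ν` is convergence along the filter `⊤ ×ˢ atTop` on `ι × ℕ`.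
-/

open Filter

/-- The series `∑ k, a k` converges (partial sums) to `l`. -/
def SeriesConv (a : ℕ → ℝ) (l : ℝ) : Prop :=
  Tendsto (fun m => ∑ k ∈ Finset.range m, a k) atTop (nhds l)

open Topology Metric Finset ZeroAtInfty

section BanachSteinhaus

variable {𝕜 E F : Type*} [NontriviallyNormedField 𝕜] [SeminormedAddCommGroup E]
  [SeminormedAddCommGroup F] [NormedSpace 𝕜 E] [NormedSpace 𝕜 F]

theorem ContinuousLinearMap.opNorm_le_of_forall_mem_ball {f : E →L[𝕜] F} {x₀ : E} {r C : ℝ}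
    (hr : 0 < r) {c : 𝕜} (hc : 1 < ‖c‖) (hf : ∀ y ∈ ball x₀ r, ‖f y‖ ≤ C) :
    ‖f‖ ≤ 2 * C * ‖c‖ / r := by
  have hC : 0 ≤ C := (norm_nonneg _).trans (hf x₀ (mem_ball_self hr))
  refine f.opNorm_le_of_shell hr (by positivity) hc fun x hx_ge hx_lt => ?_
  have hx : x₀ + x ∈ ball x₀ r := by simpa [mem_ball, dist_eq_norm] using hx_lt
  calc ‖f x‖ = ‖f (x₀ + x) - f x₀‖ := by rw [map_add, add_sub_cancel_left]
    _ ≤ C + C := (norm_sub_le _ _).trans (add_le_add (hf _ hx) (hf x₀ (mem_ball_self hr)))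
    _ = 2 * C * ‖c‖ / r * (r / ‖c‖) := by field_simp; ring
    _ ≤ 2 * C * ‖c‖ / r * ‖x‖ := by gcongr

theorem banach_steinhaus_eventually [CompleteSpace E] {P : Type*} {L : Filter P}
    [L.IsCountablyGenerated] {g : P → E →L[𝕜] F} (h : ∀ x, ∃ C, ∀ᶠ p in L, ‖g p x‖ ≤ C) :
    ∃ C, ∀ᶠ p in L, ‖g p‖ ≤ C := by
  obtain ⟨s, hs⟩ := L.exists_antitone_basis
  set A : ℕ → Set E := fun m => ⋂ p ∈ s m, {x | ‖g p x‖ ≤ m}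
  have hA_closed : ∀ m, IsClosed (A m) := fun m =>
    isClosed_biInter fun p _ => isClosed_le (g p).continuous.norm continuous_const
  have hA_cover : ⋃ m, A m = Set.univ := by
    refine Set.iUnion_eq_univ_iff.2 fun x => ?_
    obtain ⟨C, hC⟩ := h x
    obtain ⟨i, -, hi⟩ := hs.toHasBasis.mem_iff.1 hC
    refine ⟨max i ⌈C⌉₊, Set.mem_iInter₂.2 fun p hp => ?_⟩
    calc ‖g p x‖ ≤ C := hi (hs.antitone (le_max_left _ _) hp)
      _ ≤ ⌈C⌉₊ := Nat.le_ceil C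
      _ ≤ (max i ⌈C⌉₊ : ℕ) := by exact_mod_cast le_max_right _ _
  obtain ⟨m, x₀, hx₀⟩ := nonempty_interior_of_iUnion_of_closed hA_closed hA_cover
  obtain ⟨r, hr, hball⟩ := Metric.mem_nhds_iff.1 (mem_interior_iff_mem_nhds.1 hx₀)
  obtain ⟨c, hc⟩ := NormedField.exists_one_lt_norm 𝕜
  refine ⟨2 * m * ‖c‖ / r, eventually_of_mem (hs.mem m) fun p hp => ?_⟩
  exact (g p).opNorm_le_of_forall_mem_ball hr hc fun y hy => Set.mem_iInter₂.1 (hball hy) p hp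

end BanachSteinhaus

namespace ZeroAtInftyContinuousMap

variable {α β : Type*} [TopologicalSpace α] [SeminormedAddCommGroup β]

theorem norm_apply_le (f : C₀(α, β)) (x : α) : ‖f x‖ ≤ ‖f‖ :=
  f.toBCF.norm_coe_le_norm x

theorem norm_le_of_forall_le {f : C₀(α, β)} {C : ℝ} (hC : 0 ≤ C) (h : ∀ x, ‖f x‖ ≤ C) :
    ‖f‖ ≤ C :=
  (f.toBCF.norm_le hC).2 h

theorem tendsto_atTop_zero (f : ℕ →C₀ β) : Tendsto f atTop (𝓝 0) := by
  simpa [cocompact_eq_cofinite, Nat.cofinite_eq_atTop] using f.zero_at_infty'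

def ofTendstoZero (x : ℕ → β) (hx : Tendsto x atTop (𝓝 0)) : ℕ →C₀ β where
  toFun := x
  continuous_toFun := continuous_of_discreteTopology
  zero_at_infty' := by rwa [cocompact_eq_cofinite, Nat.cofinite_eq_atTop]

@[simp]
theorem ofTendstoZero_apply (x : ℕ → β) (hx : Tendsto x atTop (𝓝 0)) (k : ℕ) :
    ofTendstoZero x hx k = x k :=
  rfl

end ZeroAtInftyContinuousMap

open ZeroAtInftyContinuousMap

section Series

theorem exists_abs_le_of_tendsto {u : ℕ → ℝ} {l : ℝ} (hu : Tendsto u atTop (𝓝 l)) :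
    ∃ C, ∀ n, |u n| ≤ C := by
  obtain ⟨C, hC⟩ := hu.abs.bddAbove_range
  exact ⟨C, fun n => hC ⟨n, rfl⟩⟩

theorem tsum_ite_lt {M : Type*} [AddCommMonoid M] [TopologicalSpace M] (f : ℕ → M) (m : ℕ) :
    ∑' k, (if k < m then f k else 0) = ∑ k ∈ range m, f k :=
  (tsum_eq_sum fun k hk => if_neg (by simpa using hk)).trans
    (sum_congr rfl fun k hk => if_pos (mem_range.1 hk))

variable {c x : ℕ → ℝ} {B : ℝ}

theorem summable_mul_of_abs_le (hc : Summable fun k => |c k|) (hx : ∀ k, |x k| ≤ B) :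
    Summable fun k => c k * x k :=
  (hc.mul_right B).of_norm_bounded fun k => by
    rw [Real.norm_eq_abs, abs_mul]; exact mul_le_mul_of_nonneg_left (hx k) (abs_nonneg _)

theorem abs_tsum_mul_le (hc : Summable fun k => |c k|) (hx : ∀ k, |x k| ≤ B) :
    |∑' k, c k * x k| ≤ (∑' k, |c k|) * B := by
  have hle : ∀ k, |c k * x k| ≤ |c k| * B := fun k => by
    rw [abs_mul]; exact mul_le_mul_of_nonneg_left (hx k) (abs_nonneg _)
  have hsum : Summable fun k => |c k * x k| :=
    (hc.mul_right B).of_nonneg_of_le (fun _ => abs_nonneg _) hle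
  calc |∑' k, c k * x k| ≤ ∑' k, |c k * x k| := by
        simpa only [Real.norm_eq_abs] using norm_tsum_le_tsum_norm (f := fun k => c k * x k) hsum
    _ ≤ ∑' k, |c k| * B := hsum.tsum_le_tsum hle (hc.mul_right B)
    _ = (∑' k, |c k|) * B := hc.tsum_mul_right B

theorem abs_tsum_mul_le_sum_range_add {δ : ℝ} {K : ℕ} (hc : Summable fun k => |c k|)
    (hx : ∀ k, |x k| ≤ B) (hx_tail : ∀ k ≥ K, |x k| ≤ δ) :
    |∑' k, c k * x k| ≤ B * ∑ k ∈ range K, |c k| + δ * ∑' k, |c k| := by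
  have hδ : 0 ≤ δ := (abs_nonneg _).trans (hx_tail K le_rfl)
  have htail : Summable fun k => |c (k + K)| := (summable_nat_add_iff K).2 hc
  have htail_le : ∑' k, |c (k + K)| ≤ ∑' k, |c k| := by
    rw [← hc.sum_add_tsum_nat_add K]
    exact le_add_of_nonneg_left (sum_nonneg fun _ _ => abs_nonneg _)
  have hhead : |∑ k ∈ range K, c k * x k| ≤ B * ∑ k ∈ range K, |c k| := by
    rw [mul_sum]
    refine (abs_sum_le_sum_abs _ _).trans (sum_le_sum fun k _ => ?_)
    rw [abs_mul, mul_comm B]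
    exact mul_le_mul_of_nonneg_left (hx k) (abs_nonneg _)
  rw [← (summable_mul_of_abs_le hc hx).sum_add_tsum_nat_add K]
  calc _ ≤ |∑ k ∈ range K, c k * x k| + |∑' k, c (k + K) * x (k + K)| := abs_add_le _ _
    _ ≤ B * ∑ k ∈ range K, |c k| + (∑' k, |c (k + K)|) * δ :=
      add_le_add hhead (abs_tsum_mul_le htail fun k => hx_tail _ (Nat.le_add_left K k))
    _ ≤ B * ∑ k ∈ range K, |c k| + δ * ∑' k, |c k| := by
      rw [mul_comm δ]; gcongr

theorem seriesConv_tsum_mul {l : ℝ} (hc : Summable fun k => |c k|) (hx : Tendsto x atTop (𝓝 l)) :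
    SeriesConv (fun k => c k * x k) (∑' k, c k * x k) :=
  have ⟨_, hB⟩ := exists_abs_le_of_tendsto hx
  (summable_mul_of_abs_le hc hB).hasSum.tendsto_sum_nat

theorem exists_forall_abs_tsum_mul_le {a : ℕ → ℕ → ℝ} {C l : ℝ}
    (ha : ∀ n, Summable (fun k => |a n k|) ∧ ∑' k, |a n k| ≤ C) (hx : Tendsto x atTop (𝓝 l)) :
    ∃ M, ∀ n, |∑' k, a n k * x k| ≤ M := by
  obtain ⟨B, hB⟩ := exists_abs_le_of_tendsto hx
  exact ⟨C * B, fun n => (abs_tsum_mul_le (ha n).1 hB).trans <|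
    mul_le_mul_of_nonneg_right (ha n).2 ((abs_nonneg _).trans (hB 0))⟩

theorem tendsto_single_atTop_zero (k : ℕ) : Tendsto (Pi.single k 1 : ℕ → ℝ) atTop (𝓝 0) :=
  tendsto_const_nhds.congr' ((eventually_gt_atTop k).mono fun j hj => by simp [hj.ne'])

end Series

noncomputable def rowCLM (c : ℕ → ℝ) (hc : Summable fun k => |c k|) : (ℕ →C₀ ℝ) →L[ℝ] ℝ :=
  LinearMap.mkContinuous
    { toFun := fun x => ∑' k, c k * x k
      map_add' := fun x y => by
        simp only [ZeroAtInftyContinuousMap.coe_add, Pi.add_apply, mul_add]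
        exact (summable_mul_of_abs_le hc (norm_apply_le x)).tsum_add
          (summable_mul_of_abs_le hc (norm_apply_le y))
      map_smul' := fun r x => by
        simp only [ZeroAtInftyContinuousMap.coe_smul, Pi.smul_apply, smul_eq_mul,
          RingHom.id_apply, ← tsum_mul_left, mul_left_comm r] }
    (∑' k, |c k|) fun x => abs_tsum_mul_le hc (norm_apply_le x)

@[simp]
theorem rowCLM_apply (c : ℕ → ℝ) (hc : Summable fun k => |c k|) (x : ℕ →C₀ ℝ) :
    rowCLM c hc x = ∑' k, c k * x k :=
  rfl

noncomputable def truncatedSign (c : ℕ → ℝ) (K : ℕ) : ℕ →C₀ ℝ :=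
  ofTendstoZero (fun k => if k < K then (SignType.sign (c k) : ℝ) else 0) <|
    tendsto_const_nhds.congr' <| (eventually_ge_atTop K).mono fun k hk => by simp [not_lt.2 hk]

theorem norm_truncatedSign_le (c : ℕ → ℝ) (K : ℕ) : ‖truncatedSign c K‖ ≤ 1 :=
  norm_le_of_forall_le zero_le_one fun k => by
    simp only [truncatedSign, ofTendstoZero_apply]
    split_ifs
    · rcases SignType.sign (c k) with _ | _ | _ <;> simp
    · simp

theorem rowCLM_truncatedSign (c : ℕ → ℝ) (hc : Summable fun k => |c k|) (K : ℕ) :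
    rowCLM c hc (truncatedSign c K) = ∑ k ∈ range K, |c k| := by
  simp only [rowCLM_apply, truncatedSign, ofTendstoZero_apply, mul_ite, mul_zero, self_mul_sign,
    tsum_ite_lt]

theorem tsum_abs_le_norm_rowCLM (c : ℕ → ℝ) (hc : Summable fun k => |c k|) :
    ∑' k, |c k| ≤ ‖rowCLM c hc‖ :=
  Real.tsum_le_of_sum_range_le (fun _ => abs_nonneg _) fun K => by
    rw [← rowCLM_truncatedSign c hc K]
    exact (le_abs_self _).trans <| ((rowCLM c hc).le_opNorm _).trans <|
      mul_le_of_le_one_right (norm_nonneg _) (norm_truncatedSign_le c K)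

section Toeplitz

variable {P : Type*} {L : Filter P} {a : P → ℕ → ℝ}

theorem exists_eventually_tsum_abs_le [L.IsCountablyGenerated]
    (hsum : ∀ p, Summable fun k => |a p k|)
    (hbdd : ∀ x : ℕ → ℝ, Tendsto x atTop (𝓝 0) → ∃ C, ∀ᶠ p in L, |∑' k, a p k * x k| ≤ C) :
    ∃ C, ∀ᶠ p in L, ∑' k, |a p k| ≤ C := by
  obtain ⟨C, hC⟩ := banach_steinhaus_eventually (g := fun p => rowCLM (a p) (hsum p))
    fun x => hbdd x x.tendsto_atTop_zero
  exact ⟨C, hC.mono fun p hp => (tsum_abs_le_norm_rowCLM _ _).trans hp⟩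

theorem summable_abs_of_forall_seriesConv {c : ℕ → ℝ}
    (H : ∀ x, Tendsto x atTop (𝓝 0) → ∃ s, SeriesConv (fun k => c k * x k) s) :
    Summable fun k => |c k| := by
  have hsum (m : ℕ) : Summable fun k => |if k < m then c k else 0| :=
    summable_of_ne_finset_zero (s := range m) fun k hk => by simp [not_lt.1 (by simpa using hk)]
  obtain ⟨C, hC⟩ := exists_eventually_tsum_abs_le (L := ⊤) hsum fun x hx => by
    obtain ⟨s, hs⟩ := H x hx
    obtain ⟨C, hC⟩ := exists_abs_le_of_tendsto hs
    exact ⟨C, Eventually.of_forall fun m => by simpa [ite_mul, tsum_ite_lt] using hC m⟩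
  refine summable_of_sum_range_le (c := C) (fun _ => abs_nonneg _) fun m => ?_
  simpa [apply_ite, tsum_ite_lt] using eventually_top.1 hC m

theorem tendsto_tsum_mul_of_tendsto_zero (hsum : ∀ p, Summable fun k => |a p k|)
    (hbdd : ∃ C, ∀ᶠ p in L, ∑' k, |a p k| ≤ C) (hcol : ∀ k, Tendsto (a · k) L (𝓝 0))
    {y : ℕ → ℝ} (hy : Tendsto y atTop (𝓝 0)) :
    Tendsto (fun p => ∑' k, a p k * y k) L (𝓝 0) := by
  obtain ⟨C, hC⟩ := hbdd
  obtain ⟨B, hB⟩ := exists_abs_le_of_tendsto hy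
  refine Metric.tendsto_nhds.2 fun ε hε => ?_
  set δ := ε / (2 * (|C| + 1))
  obtain ⟨K, hK⟩ := eventually_atTop.1 <|
    nhds_basis_closedBall.tendsto_right_iff.1 hy δ (by positivity)
  have hhead : Tendsto (fun p => B * ∑ k ∈ range K, |a p k|) L (𝓝 0) := by
    simpa using (tendsto_finsetSum _ fun k _ => (hcol k).abs).const_mul B
  filter_upwards [hC, hhead (Iio_mem_nhds (half_pos hε))] with p hpC hphead
  have htail : δ * ∑' k, |a p k| ≤ ε / 2 :=
    calc δ * ∑' k, |a p k| ≤ δ * (|C| + 1) := by gcongr; linarith [le_abs_self C]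
      _ = ε / 2 := by simp only [δ]; field_simp
  rw [Real.dist_eq, sub_zero]
  calc _ ≤ B * ∑ k ∈ range K, |a p k| + δ * ∑' k, |a p k| :=
        abs_tsum_mul_le_sum_range_add (hsum p) hB fun k hk => by simpa using hK k hk
    _ < ε / 2 + ε / 2 := add_lt_add_of_lt_of_le hphead htail
    _ = ε := add_halves ε

theorem tendsto_tsum_mul_of_tendsto (hsum : ∀ p, Summable fun k => |a p k|)
    (hbdd : ∃ C, ∀ᶠ p in L, ∑' k, |a p k| ≤ C) (hrow : Tendsto (fun p => ∑' k, a p k) L (𝓝 1))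
    (hcol : ∀ k, Tendsto (a · k) L (𝓝 0)) {x : ℕ → ℝ} {l : ℝ} (hx : Tendsto x atTop (𝓝 l)) :
    Tendsto (fun p => ∑' k, a p k * x k) L (𝓝 l) := by
  have hx' : Tendsto (fun k => x k - l) atTop (𝓝 0) := tendsto_sub_nhds_zero_iff.2 hx
  obtain ⟨B, hB⟩ := exists_abs_le_of_tendsto hx'
  have hsplit (p : P) :
      ∑' k, a p k * x k = ∑' k, a p k * (x k - l) + l * ∑' k, a p k := by
    rw [← tsum_mul_left, ← (summable_mul_of_abs_le (hsum p) hB).tsum_add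
      ((hsum p).of_abs.mul_left l)]
    congr 1; ext k; ring
  simpa [hsplit] using (tendsto_tsum_mul_of_tendsto_zero hsum hbdd hcol hx').add (hrow.const_mul l)

end Toeplitz

theorem eventually_top_prod_atTop_iff {ι : Type*} {q : ι × ℕ → Prop} :
    (∀ᶠ p in (⊤ : Filter ι) ×ˢ atTop, q p) ↔ ∃ N, ∀ n ≥ N, ∀ ν, q (ν, n) := by
  simp only [top_prod, eventually_comap, eventually_atTop, Prod.forall]
  constructor
  · rintro ⟨N, hN⟩; exact ⟨N, fun n hn ν => hN n hn ν n rfl⟩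
  · rintro ⟨N, hN⟩; exact ⟨N, fun n hn ν m hm => hm ▸ hN n hn ν⟩

theorem tendsto_top_prod_atTop_iff {ι : Type*} {F : ι × ℕ → ℝ} {l : ℝ} :
    Tendsto F ((⊤ : Filter ι) ×ˢ atTop) (𝓝 l) ↔ ∀ ε > 0, ∃ N, ∀ n ≥ N, ∀ ν, |F (ν, n) - l| ≤ ε := by
  simp only [nhds_basis_closedBall.tendsto_right_iff, eventually_top_prod_atTop_iff,
    mem_closedBall, Real.dist_eq]

theorem stmt8_general {ι : Type*} (a : ι → ℕ → ℕ → ℝ) :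
    (∀ x : ℕ → ℝ, ∀ l : ℝ, Tendsto x atTop (nhds l) →
        (∀ ν n, ∃ s, SeriesConv (fun k => a ν n k * x k) s) ∧
        (∀ S : ι → ℕ → ℝ, (∀ ν n, SeriesConv (fun k => a ν n k * x k) (S ν n)) →
          (∀ ε > 0, ∃ N, ∀ n ≥ N, ∀ ν, |S ν n - l| ≤ ε) ∧
          (∀ ν, ∃ M, ∀ n, |S ν n| ≤ M))) ↔
      ((∀ ν, ∃ C, ∀ n, Summable (fun k => |a ν n k|) ∧ ∑' k, |a ν n k| ≤ C) ∧
        (∃ N, ∃ C, ∀ ν, ∀ n ≥ N, ∑' k, |a ν n k| ≤ C) ∧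
        (∀ ε > 0, ∃ N, ∀ n ≥ N, ∀ ν, |(∑' k, a ν n k) - 1| ≤ ε) ∧
        (∀ k, ∀ ε > 0, ∃ N, ∀ n ≥ N, ∀ ν, |a ν n k| ≤ ε)) := by
  constructor
  · intro H
    have hsum (ν n) : Summable fun k => |a ν n k| :=
      summable_abs_of_forall_seriesConv fun x hx => (H x 0 hx).1 ν n
    have hA {x l} (hx : Tendsto x atTop (𝓝 l)) :=
      (H x l hx).2 _ fun ν n => seriesConv_tsum_mul (hsum ν n) hx
    refine ⟨fun ν => ?_, ?_, ?_, fun k => ?_⟩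
    · obtain ⟨C, hC⟩ := exists_eventually_tsum_abs_le (L := ⊤) (hsum ν) fun x hx => (hA hx).2 ν
      exact ⟨C, fun n => ⟨hsum ν n, eventually_top.1 hC n⟩⟩
    · obtain ⟨C, hC⟩ := exists_eventually_tsum_abs_le (L := ⊤ ×ˢ atTop) (fun p => hsum p.1 p.2)
        fun x hx => ⟨1, eventually_top_prod_atTop_iff.2 <| by simpa using (hA hx).1 1 one_pos⟩
      obtain ⟨N, hN⟩ := eventually_top_prod_atTop_iff.1 hC
      exact ⟨N, C, fun ν n hn => hN n hn ν⟩
    · simpa using (hA (x := fun _ => 1) (l := 1) tendsto_const_nhds).1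
    · simpa [Pi.single_apply] using (hA (tendsto_single_atTop_zero k)).1
  · rintro ⟨hM1, ⟨N, C, hC⟩, hM3, hM4⟩ x l hx
    have hsum (ν n) : Summable fun k => |a ν n k| := by obtain ⟨_, h⟩ := hM1 ν; exact (h n).1
    refine ⟨fun ν n => ⟨_, seriesConv_tsum_mul (hsum ν n) hx⟩, fun S hS => ?_⟩
    have hS_eq (ν n) : S ν n = ∑' k, a ν n k * x k :=
      tendsto_nhds_unique (hS ν n) (seriesConv_tsum_mul (hsum ν n) hx)
    have hlim := tendsto_tsum_mul_of_tendsto (L := ⊤ ×ˢ atTop) (fun p => hsum p.1 p.2)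
      ⟨C, eventually_top_prod_atTop_iff.2 ⟨N, fun n hn ν => hC ν n hn⟩⟩
      (tendsto_top_prod_atTop_iff.2 hM3)
      (fun k => tendsto_top_prod_atTop_iff.2 <| by simpa using hM4 k) hx
    simp only [hS_eq]
    exact ⟨tendsto_top_prod_atTop_iff.1 hlim,
      fun ν => (hM1 ν).elim fun _ h => exists_forall_abs_tsum_mul_le h hx⟩

/-- Uniform Silverman–Toeplitz theorem (Bell). -/
theorem stmt8 {ι : Type*} [Nonempty ι] (a : ι → ℕ → ℕ → ℝ) :
    (∀ x : ℕ → ℝ, ∀ l : ℝ, Tendsto x atTop (nhds l) →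
        (∀ ν n, ∃ s, SeriesConv (fun k => a ν n k * x k) s) ∧
        (∀ S : ι → ℕ → ℝ, (∀ ν n, SeriesConv (fun k => a ν n k * x k) (S ν n)) →
          (∀ ε > 0, ∃ N, ∀ n ≥ N, ∀ ν, |S ν n - l| ≤ ε) ∧
          (∀ ν, ∃ M, ∀ n, |S ν n| ≤ M))) ↔
      ((∀ ν, ∃ C, ∀ n, Summable (fun k => |a ν n k|) ∧ ∑' k, |a ν n k| ≤ C) ∧
        (∃ N, ∃ C, ∀ ν, ∀ n ≥ N, ∑' k, |a ν n k| ≤ C) ∧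
        (∀ ε > 0, ∃ N, ∀ n ≥ N, ∀ ν, |(∑' k, a ν n k) - 1| ≤ ε) ∧
        (∀ k, ∀ ε > 0, ∃ N, ∀ n ≥ N, ∀ ν, |a ν n k| ≤ ε)) :=
  stmt8_general a
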